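/- arXiv:1811.02834 — 5 statements merged into one kernel-verified Lean document; each statement's English description precedes it below -/
import Mathlib

section
/- For every p ≥ 2 and every t ∈ (0,1), there exists a constant C = C(p,t) > 0 such that for all vectors a, b ∈ ℝ^d, ‖t·a + (1−t)·b‖_p^p ≤ t‖a‖_p^p + (1−t)‖b‖_p^p − (t(1−t)/C)‖a−b‖_p^p. -/
/-!
For two reals, write `|x|^p = (x²)^(p/2)`: superadditivity of `s ↦ s^(p/2)` together with the
parallelogram identity `((x+y)/2)² + ((x-y)/2)² = (x² + y²)/2` and convexity give Clarkson's
midpoint inequality `|(x+y)/2|^p + |(x-y)/2|^p ≤ (|x|^p + |y|^p)/2`. A general convex combination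
with `t ≤ 1/2` is the combination of the midpoint and `y` with weights `2t` and `1 - 2t`, so it
inherits the fraction `2t` of the midpoint deficit; the case `t ≥ 1/2` follows by symmetry, and
the vector inequality is the coordinatewise one summed.
-/

open Real Set

theorem convexOn_norm_rpow {E : Type*} [SeminormedAddCommGroup E] [NormedSpace ℝ E] {p : ℝ}
    (hp : 1 ≤ p) : ConvexOn ℝ univ fun x : E => ‖x‖ ^ p := by
  refine ⟨convex_univ, fun x _ y _ a b ha hb hab => ?_⟩
  calc ‖a • x + b • y‖ ^ p ≤ (a * ‖x‖ + b * ‖y‖) ^ p := by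
        gcongr
        calc ‖a • x + b • y‖ ≤ ‖a • x‖ + ‖b • y‖ := norm_add_le _ _
          _ = a * ‖x‖ + b * ‖y‖ := by
            rw [norm_smul_of_nonneg ha, norm_smul_of_nonneg hb]
    _ ≤ a * ‖x‖ ^ p + b * ‖y‖ ^ p :=
        (convexOn_rpow hp).2 (norm_nonneg x) (norm_nonneg y) ha hb hab

namespace Real

theorem abs_rpow_eq_sq_rpow (p x : ℝ) : |x| ^ p = (x ^ 2) ^ (p / 2) := by
  rw [← sq_abs, ← rpow_natCast, ← rpow_mul (abs_nonneg x)]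
  congr 1
  ring

variable {p : ℝ}

theorem abs_rpow_add_abs_rpow_le_sq_add_sq_rpow (hp : 2 ≤ p) (x y : ℝ) :
    |x| ^ p + |y| ^ p ≤ (x ^ 2 + y ^ 2) ^ (p / 2) := by
  rw [abs_rpow_eq_sq_rpow, abs_rpow_eq_sq_rpow]
  exact add_rpow_le_rpow_add (sq_nonneg x) (sq_nonneg y) (by linarith)

theorem sq_add_sq_div_two_rpow_le (hp : 2 ≤ p) (x y : ℝ) :
    ((x ^ 2 + y ^ 2) / 2) ^ (p / 2) ≤ (|x| ^ p + |y| ^ p) / 2 := by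
  have h : (1 / 2 * x ^ 2 + 1 / 2 * y ^ 2) ^ (p / 2) ≤
      1 / 2 * (x ^ 2) ^ (p / 2) + 1 / 2 * (y ^ 2) ^ (p / 2) :=
    (convexOn_rpow (by linarith)).2 (sq_nonneg x) (sq_nonneg y) (by norm_num) (by norm_num)
      (by norm_num)
  rw [show (x ^ 2 + y ^ 2) / 2 = 1 / 2 * x ^ 2 + 1 / 2 * y ^ 2 by ring,
    abs_rpow_eq_sq_rpow p x, abs_rpow_eq_sq_rpow p y]
  linarith

theorem abs_rpow_half_add_add_abs_rpow_half_sub_le (hp : 2 ≤ p) (x y : ℝ) :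
    |(x + y) / 2| ^ p + |(x - y) / 2| ^ p ≤ (|x| ^ p + |y| ^ p) / 2 :=
  calc |(x + y) / 2| ^ p + |(x - y) / 2| ^ p
      ≤ (((x + y) / 2) ^ 2 + ((x - y) / 2) ^ 2) ^ (p / 2) :=
        abs_rpow_add_abs_rpow_le_sq_add_sq_rpow hp _ _
    _ = ((x ^ 2 + y ^ 2) / 2) ^ (p / 2) := by ring_nf
    _ ≤ (|x| ^ p + |y| ^ p) / 2 := sq_add_sq_div_two_rpow_le hp x y

theorem abs_rpow_convex_comb_add_le_of_le_half (hp : 2 ≤ p) {t : ℝ} (ht₀ : 0 ≤ t)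
    (ht : t ≤ 1 / 2) (x y : ℝ) :
    |t * x + (1 - t) * y| ^ p + t / 2 ^ (p - 1) * |x - y| ^ p ≤
      t * |x| ^ p + (1 - t) * |y| ^ p := by
  have hconv :
      |t * x + (1 - t) * y| ^ p ≤ 2 * t * |(x + y) / 2| ^ p + (1 - 2 * t) * |y| ^ p := by
    rw [show t * x + (1 - t) * y = 2 * t * ((x + y) / 2) + (1 - 2 * t) * y by ring]
    simpa only [smul_eq_mul, norm_eq_abs] using
      (convexOn_norm_rpow (E := ℝ) (p := p) (by linarith)).2 (mem_univ ((x + y) / 2))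
        (mem_univ y) (by linarith : 0 ≤ 2 * t) (by linarith : 0 ≤ 1 - 2 * t) (by ring)
  have hmid := mul_le_mul_of_nonneg_left (abs_rpow_half_add_add_abs_rpow_half_sub_le hp x y)
    (by linarith : 0 ≤ 2 * t)
  have hdeficit : 2 * t * |(x - y) / 2| ^ p = t / 2 ^ (p - 1) * |x - y| ^ p := by
    rw [abs_div, abs_two, div_rpow (abs_nonneg _) zero_le_two, rpow_sub_one two_ne_zero]
    field_simp
  linarith

theorem abs_rpow_convex_comb_le (hp : 2 ≤ p) {t : ℝ} (ht₀ : 0 ≤ t) (ht₁ : t ≤ 1) (x y : ℝ) :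
    |t * x + (1 - t) * y| ^ p ≤
      t * |x| ^ p + (1 - t) * |y| ^ p - t * (1 - t) / 2 ^ (p - 1) * |x - y| ^ p := by
  rcases le_total t (1 / 2) with ht | ht
  · have h := abs_rpow_convex_comb_add_le_of_le_half hp ht₀ ht x y
    have hcoef :
        t * (1 - t) / 2 ^ (p - 1) * |x - y| ^ p ≤ t / 2 ^ (p - 1) * |x - y| ^ p := by
      gcongr
      nlinarith
    linarith
  · have h := abs_rpow_convex_comb_add_le_of_le_half hp (by linarith)
      (by linarith : 1 - t ≤ 1 / 2) y x
    rw [sub_sub_cancel, abs_sub_comm y x, add_comm ((1 - t) * y)] at h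
    have hcoef :
        t * (1 - t) / 2 ^ (p - 1) * |x - y| ^ p ≤ (1 - t) / 2 ^ (p - 1) * |x - y| ^ p := by
      gcongr
      nlinarith
    linarith

end Real

theorem stmt2 (p : ℝ) (hp : 2 ≤ p) (t : ℝ) (ht : t ∈ Set.Ioo (0 : ℝ) 1) :
    ∃ C > (0 : ℝ), ∀ (d : ℕ) (a b : Fin d → ℝ),
      ∑ i, |t * a i + (1 - t) * b i| ^ p ≤
        t * ∑ i, |a i| ^ p + (1 - t) * ∑ i, |b i| ^ p
          - (t * (1 - t) / C) * ∑ i, |a i - b i| ^ p := by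
  refine ⟨2 ^ (p - 1), by positivity, fun d a b => ?_⟩
  calc ∑ i, |t * a i + (1 - t) * b i| ^ p
      ≤ ∑ i, (t * |a i| ^ p + (1 - t) * |b i| ^ p
        - t * (1 - t) / 2 ^ (p - 1) * |a i - b i| ^ p) :=
        Finset.sum_le_sum fun i _ => abs_rpow_convex_comb_le hp ht.1.le ht.2.le (a i) (b i)
    _ = t * ∑ i, |a i| ^ p + (1 - t) * ∑ i, |b i| ^ p
        - t * (1 - t) / 2 ^ (p - 1) * ∑ i, |a i - b i| ^ p := by
      simp only [Finset.sum_sub_distrib, Finset.sum_add_distrib, Finset.mul_sum]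
end

section
/- Let X, Y, A, B be metric spaces with A, B subsets of a common metric space (Ω,d), let μ be a probability measure on X×A and ν on Y×B, and let π be a coupling of μ and ν. Let L(x,y,x',y') = |d_X(x,x') − d_Y(y,y')|. For α ∈ [0,1], p,q ≥ 1, the fused cost E(π) = ∬ ((1−α)d(a,b)^q + α L(x,y,x',y')^q)^p dπ dπ satisfies E(π)^{1/p} ≥ (1−α)·(∫ d(a,b)^{pq} d(P_{A,B}#π))^{1/p}, where P_{A,B}#π is the pushforward of π onto A×B. In particular, taking infima over couplings, FGW_{α,p,q}(μ,ν) ≥ (1−α)·W_{pq}(μ_A, ν_B)^q, with W_{pq} the (pq)-Wasserstein distance between the feature marginals. -/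
open MeasureTheory ENNReal Set

noncomputable section

/-- The set of couplings of two probability measures on `X × Ω` and `Y × Ω`. -/
def Couplings {X Y Ω : Type*} [MeasurableSpace X] [MeasurableSpace Y] [MeasurableSpace Ω]
    (μ : Measure (X × Ω)) (ν : Measure (Y × Ω)) : Set (Measure ((X × Ω) × (Y × Ω))) :=
  {π | π.map Prod.fst = μ ∧ π.map Prod.snd = ν}

/-- The fused Gromov-Wasserstein cost of a coupling `π`, with trade-off `α` and
exponents `p, q`. Here `w.1.1, w.2.1` are the structure points `x, y` and
`w.1.2, w.2.2` the feature points `a, b`. -/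
def fgwE {X Y Ω : Type*} [MetricSpace X] [MetricSpace Y] [MetricSpace Ω]
    [MeasurableSpace X] [MeasurableSpace Y] [MeasurableSpace Ω]
    (α p q : ℝ) (π : Measure ((X × Ω) × (Y × Ω))) : ℝ≥0∞ :=
  ∫⁻ w, (∫⁻ w', ENNReal.ofReal
      (((1 - α) * dist w.1.2 w.2.2 ^ q
        + α * |dist w.1.1 w'.1.1 - dist w.2.1 w'.2.1| ^ q) ^ p) ∂π) ∂π

/-- The fused Gromov-Wasserstein distance. -/
def FGW {X Y Ω : Type*} [MetricSpace X] [MetricSpace Y] [MetricSpace Ω]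
    [MeasurableSpace X] [MeasurableSpace Y] [MeasurableSpace Ω]
    (α p q : ℝ) (μ : Measure (X × Ω)) (ν : Measure (Y × Ω)) : ℝ≥0∞ :=
  (⨅ π ∈ Couplings μ ν, fgwE α p q π) ^ (1 / p)

/-- The `r`-Wasserstein distance between two measures on a common metric space `Ω`. -/
def Wass {Ω : Type*} [MetricSpace Ω] [MeasurableSpace Ω]
    (r : ℝ) (μA νB : Measure Ω) : ℝ≥0∞ :=
  (⨅ γ ∈ {γ : Measure (Ω × Ω) | γ.map Prod.fst = μA ∧ γ.map Prod.snd = νB},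
    ∫⁻ z, ENNReal.ofReal (dist z.1 z.2 ^ r) ∂γ) ^ (1 / r)

/-!
Dropping the structure term `α L^q` from the fused cost leaves the integrand
`((1 - α) d(a,b)^q)^p = (1 - α)^p d(a,b)^{pq}`, which no longer depends on the second
point `w'`; since `π` is a probability measure the inner integral is then trivial, so
`E(π) ≥ (1 - α)^p ∫ d(a,b)^{pq} dπ`. Taking `p`-th roots gives the first claim. The
feature projection of any coupling of `μ, ν` is a coupling of `μ_A, ν_B`, so the right
side dominates `(1 - α)^p W_{pq}(μ_A, ν_B)^{pq}`, and taking the infimum over `π`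
gives the second.
-/

lemma rpow_mul_rpow_mul_le_rpow_add {a d e p q : ℝ} (ha : 0 ≤ a) (hd : 0 ≤ d) (he : 0 ≤ e)
    (hp : 0 ≤ p) : a ^ p * d ^ (p * q) ≤ (a * d ^ q + e) ^ p := by
  have hdq : 0 ≤ d ^ q := Real.rpow_nonneg hd q
  calc a ^ p * d ^ (p * q) = (a * d ^ q) ^ p := by
        rw [Real.mul_rpow ha hdq, mul_comm p q, Real.rpow_mul hd]
    _ ≤ (a * d ^ q + e) ^ p :=
        Real.rpow_le_rpow (mul_nonneg ha hdq) (le_add_of_nonneg_right he) hp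

lemma ENNReal.mul_rpow_one_div {a b : ℝ≥0∞} {p : ℝ} (hp : 0 < p) :
    a * b ^ (1 / p) = (a ^ p * b) ^ (1 / p) := by
  rw [ENNReal.mul_rpow_of_nonneg _ _ (by positivity), ← ENNReal.rpow_mul,
    mul_one_div_cancel hp.ne', ENNReal.rpow_one]

section Couplings

variable {X Y Ω : Type*} [MeasurableSpace X] [MeasurableSpace Y] [MeasurableSpace Ω]
  {μ : Measure (X × Ω)} {ν : Measure (Y × Ω)} {π : Measure ((X × Ω) × (Y × Ω))}

lemma isProbabilityMeasure_of_mem_couplings [IsProbabilityMeasure μ]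
    (hπ : π ∈ Couplings μ ν) : IsProbabilityMeasure π :=
  have : IsProbabilityMeasure (π.map Prod.fst) := hπ.1 ▸ ‹_›
  Measure.isProbabilityMeasure_of_map Prod.fst

lemma map_features_marginals_of_mem_couplings (hπ : π ∈ Couplings μ ν) :
    (π.map fun w => (w.1.2, w.2.2)).map Prod.fst = μ.map Prod.snd ∧
      (π.map fun w => (w.1.2, w.2.2)).map Prod.snd = ν.map Prod.snd := by
  have hf : Measurable fun w : (X × Ω) × (Y × Ω) => (w.1.2, w.2.2) := by fun_prop
  constructor
  · rw [Measure.map_map measurable_fst hf, ← hπ.1, Measure.map_map measurable_snd measurable_fst]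
    rfl
  · rw [Measure.map_map measurable_snd hf, ← hπ.2, Measure.map_map measurable_snd measurable_snd]
    rfl

end Couplings

lemma ofReal_rpow_mul_lintegral_le_fgwE {X Y Ω : Type*} [MetricSpace X] [MetricSpace Y]
    [MetricSpace Ω] [MeasurableSpace X] [MeasurableSpace Y] [MeasurableSpace Ω]
    {α p : ℝ} (q : ℝ) (π : Measure ((X × Ω) × (Y × Ω))) [IsProbabilityMeasure π]
    (hα : α ∈ Icc (0 : ℝ) 1) (hp : 0 ≤ p) :
    ENNReal.ofReal (1 - α) ^ p * ∫⁻ w, ENNReal.ofReal (dist w.1.2 w.2.2 ^ (p * q)) ∂π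
      ≤ fgwE α p q π := by
  have h1α : 0 ≤ 1 - α := sub_nonneg.2 hα.2
  rw [← lintegral_const_mul' _ _ (rpow_ne_top_of_nonneg hp ofReal_ne_top)]
  refine lintegral_mono fun w => ?_
  calc ENNReal.ofReal (1 - α) ^ p * ENNReal.ofReal (dist w.1.2 w.2.2 ^ (p * q))
      = ∫⁻ _, ENNReal.ofReal ((1 - α) ^ p * dist w.1.2 w.2.2 ^ (p * q)) ∂π := by
        rw [lintegral_const, measure_univ, mul_one, ENNReal.ofReal_mul (by positivity),
          ofReal_rpow_of_nonneg h1α hp]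
    _ ≤ _ := lintegral_mono fun w' => ofReal_le_ofReal <|
        rpow_mul_rpow_mul_le_rpow_add h1α dist_nonneg
          (mul_nonneg hα.1 (Real.rpow_nonneg (abs_nonneg _) q)) hp

theorem stmt4_general {X Y Ω : Type*} [MetricSpace X] [MetricSpace Y] [MetricSpace Ω]
    [MeasurableSpace X] [MeasurableSpace Y]
    [MeasurableSpace Ω]
    (μ : Measure (X × Ω)) (ν : Measure (Y × Ω))
    [IsProbabilityMeasure μ]
    (α p q : ℝ) (hα : α ∈ Set.Icc (0 : ℝ) 1) (hp : 1 ≤ p) (hq : 1 ≤ q) :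
    (∀ π ∈ Couplings μ ν,
      ENNReal.ofReal (1 - α) *
        (∫⁻ z, ENNReal.ofReal (dist z.1 z.2 ^ (p * q))
          ∂(π.map (fun w => (w.1.2, w.2.2)))) ^ (1 / p)
        ≤ (fgwE α p q π) ^ (1 / p)) ∧
    ENNReal.ofReal (1 - α) * (Wass (p * q) (μ.map Prod.snd) (ν.map Prod.snd)) ^ q
      ≤ FGW α p q μ ν := by
  have hp0 : 0 < p := by linarith
  have key : ∀ π ∈ Couplings μ ν,
      ENNReal.ofReal (1 - α) ^ p *
        ∫⁻ z, ENNReal.ofReal (dist z.1 z.2 ^ (p * q)) ∂(π.map fun w => (w.1.2, w.2.2))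
        ≤ fgwE α p q π := fun π hπ =>
    have := isProbabilityMeasure_of_mem_couplings hπ
    (mul_le_mul_right (lintegral_map_le _ _) _).trans
      (ofReal_rpow_mul_lintegral_le_fgwE q π hα hp0.le)
  refine ⟨fun π hπ => ?_, ?_⟩
  · rw [ENNReal.mul_rpow_one_div hp0]
    exact rpow_le_rpow (key π hπ) (by positivity)
  · rw [Wass, ← ENNReal.rpow_mul, show 1 / (p * q) * q = 1 / p by field_simp,
      ENNReal.mul_rpow_one_div hp0, FGW]
    refine rpow_le_rpow (le_iInf₂ fun π hπ => ?_) (by positivity)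
    refine (mul_le_mul_right ?_ _).trans (key π hπ)
    exact biInf_le _ (by exact map_features_marginals_of_mem_couplings hπ)

theorem stmt4 {X Y Ω : Type*} [MetricSpace X] [MetricSpace Y] [MetricSpace Ω]
    [CompactSpace X] [CompactSpace Y]
    [MeasurableSpace X] [BorelSpace X] [MeasurableSpace Y] [BorelSpace Y]
    [MeasurableSpace Ω] [BorelSpace Ω]
    (μ : Measure (X × Ω)) (ν : Measure (Y × Ω))
    [IsProbabilityMeasure μ] [IsProbabilityMeasure ν]
    (α p q : ℝ) (hα : α ∈ Set.Icc (0 : ℝ) 1) (hp : 1 ≤ p) (hq : 1 ≤ q) :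
    (∀ π ∈ Couplings μ ν,
      ENNReal.ofReal (1 - α) *
        (∫⁻ z, ENNReal.ofReal (dist z.1 z.2 ^ (p * q))
          ∂(π.map (fun w => (w.1.2, w.2.2)))) ^ (1 / p)
        ≤ (fgwE α p q π) ^ (1 / p)) ∧
    ENNReal.ofReal (1 - α) * (Wass (p * q) (μ.map Prod.snd) (ν.map Prod.snd)) ^ q
      ≤ FGW α p q μ ν :=
  stmt4_general μ ν α p q hα hp hq

end
end

section
/- Under the same setting as the feature inequality, FGW_{α,p,q}(μ,ν) ≥ α · GW_{pq}(μ_X, ν_Y)^q, where GW_{pq} is the (pq)-Gromov–Wasserstein distance between the structure marginals μ_X ∈ P(X) and ν_Y ∈ P(Y). -/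
/-!
Pushing an FGW coupling `π` forward along `((x, a), (y, b)) ↦ (x, y)` gives a coupling of the
structure marginals, and the FGW integrand dominates its structure part:
`((1 - α) d(a, b)^q + α |d(x, x') - d(y, y')|^q)^p ≥ α^p |d(x, x') - d(y, y')|^(pq)`.
Hence `α^p · GW_{pq}^{pq} ≤ FGW^p`, and taking `p`-th roots gives the claim.
-/

open MeasureTheory ENNReal Set

noncomputable section

/-- The `r`-Gromov-Wasserstein distance between measures on metric spaces `X` and `Y`. -/
def GW {X Y : Type*} [MetricSpace X] [MetricSpace Y]
    [MeasurableSpace X] [MeasurableSpace Y]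
    (r : ℝ) (μX : Measure X) (νY : Measure Y) : ℝ≥0∞ :=
  (⨅ γ ∈ {γ : Measure (X × Y) | γ.map Prod.fst = μX ∧ γ.map Prod.snd = νY},
    ∫⁻ z, (∫⁻ z', ENNReal.ofReal (|dist z.1 z'.1 - dist z.2 z'.2| ^ r) ∂γ) ∂γ) ^ (1 / r)

def gwCost {X Y : Type*} [MetricSpace X] [MetricSpace Y] [MeasurableSpace X] [MeasurableSpace Y]
    (r : ℝ) (γ : Measure (X × Y)) : ℝ≥0∞ :=
  ∫⁻ z, (∫⁻ z', ENNReal.ofReal (|dist z.1 z'.1 - dist z.2 z'.2| ^ r) ∂γ) ∂γ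

theorem lintegral_lintegral_map_le {α β : Type*} [MeasurableSpace α] [MeasurableSpace β]
    (μ : Measure α) (g : α → β) (F : β → β → ℝ≥0∞) :
    ∫⁻ z, (∫⁻ z', F z z' ∂μ.map g) ∂μ.map g ≤ ∫⁻ w, (∫⁻ w', F (g w) (g w') ∂μ) ∂μ :=
  (lintegral_map_le _ g).trans <| lintegral_mono fun w ↦ lintegral_map_le (F (g w)) g

section Structure

variable {X Y Ω : Type*} [MeasurableSpace X] [MeasurableSpace Y] [MeasurableSpace Ω]

def structurePair (w : (X × Ω) × (Y × Ω)) : X × Y := (w.1.1, w.2.1)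

theorem measurable_structurePair : Measurable (structurePair : (X × Ω) × (Y × Ω) → X × Y) :=
  measurable_fst.fst.prodMk measurable_snd.fst

theorem map_structurePair_fst {μ : Measure (X × Ω)} {ν : Measure (Y × Ω)}
    {π : Measure ((X × Ω) × (Y × Ω))} (hπ : π ∈ Couplings μ ν) :
    (π.map structurePair).map Prod.fst = μ.map Prod.fst := by
  rw [Measure.map_map measurable_fst measurable_structurePair, ← hπ.1,
    Measure.map_map measurable_fst measurable_fst]
  rfl

theorem map_structurePair_snd {μ : Measure (X × Ω)} {ν : Measure (Y × Ω)}
    {π : Measure ((X × Ω) × (Y × Ω))} (hπ : π ∈ Couplings μ ν) :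
    (π.map structurePair).map Prod.snd = ν.map Prod.fst := by
  rw [Measure.map_map measurable_snd measurable_structurePair, ← hπ.2,
    Measure.map_map measurable_fst measurable_snd]
  rfl

end Structure

theorem rpow_mul_rpow_mul_le_add_mul_rpow {α p q s t : ℝ} (hα : 0 ≤ α) (hp : 0 ≤ p)
    (hs : 0 ≤ s) (ht : 0 ≤ t) : α ^ p * t ^ (p * q) ≤ (s + α * t ^ q) ^ p := by
  rw [mul_comm p q, Real.rpow_mul ht, ← Real.mul_rpow hα (Real.rpow_nonneg ht q)]
  exact Real.rpow_le_rpow (by positivity) (le_add_of_nonneg_left hs) hp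

theorem ofReal_rpow_mul_gwCost_le_fgwE {X Y Ω : Type*} [MetricSpace X] [MetricSpace Y]
    [MetricSpace Ω] [MeasurableSpace X] [MeasurableSpace Y] [MeasurableSpace Ω]
    {α p : ℝ} (q : ℝ) (hα : α ∈ Set.Icc (0 : ℝ) 1) (hp : 0 ≤ p)
    (π : Measure ((X × Ω) × (Y × Ω))) :
    ENNReal.ofReal (α ^ p) * gwCost (p * q) (π.map structurePair) ≤ fgwE α p q π := by
  have hα0 := hα.1
  have h1α : 0 ≤ 1 - α := sub_nonneg.2 hα.2
  calc ENNReal.ofReal (α ^ p) * gwCost (p * q) (π.map structurePair)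
      ≤ ENNReal.ofReal (α ^ p) * ∫⁻ w, (∫⁻ w', ENNReal.ofReal
          (|dist w.1.1 w'.1.1 - dist w.2.1 w'.2.1| ^ (p * q)) ∂π) ∂π :=
        mul_le_mul_right (lintegral_lintegral_map_le π structurePair _) _
    _ ≤ ∫⁻ w, (∫⁻ w', ENNReal.ofReal (α ^ p) * ENNReal.ofReal
          (|dist w.1.1 w'.1.1 - dist w.2.1 w'.2.1| ^ (p * q)) ∂π) ∂π :=
        (lintegral_const_mul_le _ _).trans <| lintegral_mono fun w ↦ lintegral_const_mul_le _ _
    _ ≤ fgwE α p q π := by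
        refine lintegral_mono fun w ↦ lintegral_mono fun w' ↦ ?_
        rw [← ENNReal.ofReal_mul (by positivity)]
        exact ENNReal.ofReal_le_ofReal <| rpow_mul_rpow_mul_le_add_mul_rpow hα0 hp
          (by positivity) (abs_nonneg _)

theorem GW_eq_iInf_gwCost_rpow {X Y : Type*} [MetricSpace X] [MetricSpace Y]
    [MeasurableSpace X] [MeasurableSpace Y] (r : ℝ) (μX : Measure X) (νY : Measure Y) :
    GW r μX νY = (⨅ γ ∈ {γ : Measure (X × Y) | γ.map Prod.fst = μX ∧ γ.map Prod.snd = νY},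
      gwCost r γ) ^ (1 / r) :=
  rfl

theorem ofReal_rpow_mul_iInf_gwCost_le_iInf_fgwE {X Y Ω : Type*} [MetricSpace X]
    [MetricSpace Y] [MetricSpace Ω] [MeasurableSpace X] [MeasurableSpace Y] [MeasurableSpace Ω]
    (μ : Measure (X × Ω)) (ν : Measure (Y × Ω)) {α p : ℝ} (q : ℝ)
    (hα : α ∈ Set.Icc (0 : ℝ) 1) (hp : 0 ≤ p) :
    ENNReal.ofReal (α ^ p) * (⨅ γ ∈ {γ : Measure (X × Y) |
        γ.map Prod.fst = μ.map Prod.fst ∧ γ.map Prod.snd = ν.map Prod.fst}, gwCost (p * q) γ)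
      ≤ ⨅ π ∈ Couplings μ ν, fgwE α p q π :=
  le_iInf₂ fun π hπ ↦ (mul_le_mul_right (iInf₂_le (π.map structurePair)
    ⟨map_structurePair_fst hπ, map_structurePair_snd hπ⟩) _).trans
      (ofReal_rpow_mul_gwCost_le_fgwE q hα hp π)

theorem stmt5_general {X Y Ω : Type*} [MetricSpace X] [MetricSpace Y] [MetricSpace Ω]
    [MeasurableSpace X] [MeasurableSpace Y]
    [MeasurableSpace Ω]
    (μ : Measure (X × Ω)) (ν : Measure (Y × Ω))
    (α p q : ℝ) (hα : α ∈ Set.Icc (0 : ℝ) 1) (hp : 1 ≤ p) (hq : 1 ≤ q) :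
    ENNReal.ofReal α * (GW (p * q) (μ.map Prod.fst) (ν.map Prod.fst)) ^ q
      ≤ FGW α p q μ ν := by
  have hp0 : 0 < p := zero_lt_one.trans_le hp
  have hq0 : q ≠ 0 := (zero_lt_one.trans_le hq).ne'
  have hα_eq : ENNReal.ofReal α = ENNReal.ofReal (α ^ p) ^ (1 / p) := by
    rw [ENNReal.ofReal_rpow_of_nonneg (Real.rpow_nonneg hα.1 p) (by positivity),
      ← Real.rpow_mul hα.1, mul_one_div_cancel hp0.ne', Real.rpow_one]
  have h_exp : 1 / (p * q) * q = 1 / p := by field_simp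
  rw [FGW, GW_eq_iInf_gwCost_rpow, ← ENNReal.rpow_mul, h_exp, hα_eq,
    ← ENNReal.mul_rpow_of_nonneg _ _ (by positivity)]
  exact ENNReal.rpow_le_rpow (ofReal_rpow_mul_iInf_gwCost_le_iInf_fgwE μ ν q hα hp0.le)
    (by positivity)

theorem stmt5 {X Y Ω : Type*} [MetricSpace X] [MetricSpace Y] [MetricSpace Ω]
    [CompactSpace X] [CompactSpace Y]
    [MeasurableSpace X] [BorelSpace X] [MeasurableSpace Y] [BorelSpace Y]
    [MeasurableSpace Ω] [BorelSpace Ω]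
    (μ : Measure (X × Ω)) (ν : Measure (Y × Ω))
    [IsProbabilityMeasure μ] [IsProbabilityMeasure ν]
    (α p q : ℝ) (hα : α ∈ Set.Icc (0 : ℝ) 1) (hp : 1 ≤ p) (hq : 1 ≤ q) :
    ENNReal.ofReal α * (GW (p * q) (μ.map Prod.fst) (ν.map Prod.fst)) ^ q
      ≤ FGW α p q μ ν :=
  stmt5_general μ ν α p q hα hp hq

end
end

section
/- If there exists a map f = (f₁, f₂) : X×A → Y×B with f#μ = ν, f₁ : X → Y an isometry, and f₂ = Id (so A = B and f₂(a) = a), then FGW_{α,p,q}(μ,ν) = 0 for all α ∈ (0,1), p, q ≥ 1. -/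
open MeasureTheory ENNReal Set

noncomputable section

/-!
The coupling `π` obtained by pushing `μ` forward along the graph `z ↦ (z, (f₁ z.1, z.2))`
only charges pairs `((x, a), (f₁ x, a))`. On such pairs the feature term `d(a, a)` vanishes,
and, since `f₁` preserves distances, so does the structure term
`|d(x, x') - d(f₁ x, f₁ x')|`. Hence the cost of `π` is zero, and so is the infimum over
all couplings.
-/

namespace FGW

variable {X Y Ω : Type*} [MeasurableSpace X] [MeasurableSpace Y] [MeasurableSpace Ω]

theorem map_graph_mem_couplings {μ : Measure (X × Ω)} {ν : Measure (Y × Ω)}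
    {T : X × Ω → Y × Ω} (hT : Measurable T) (hpush : μ.map T = ν) :
    μ.map (fun z => (z, T z)) ∈ Couplings μ ν := by
  have hgraph : Measurable fun z => (z, T z) := measurable_id.prodMk hT
  constructor
  · rw [Measure.map_map measurable_fst hgraph]
    exact Measure.map_id
  · rwa [Measure.map_map measurable_snd hgraph]

variable [MetricSpace X] [MetricSpace Y] [MetricSpace Ω]

theorem eq_zero_of_fgwE_eq_zero {α p q : ℝ} {μ : Measure (X × Ω)} {ν : Measure (Y × Ω)}
    {π : Measure ((X × Ω) × (Y × Ω))} (hπ : π ∈ Couplings μ ν) (hcost : fgwE α p q π = 0)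
    (hp : 0 < p) : FGW α p q μ ν = 0 := by
  have hinf : ⨅ π' ∈ Couplings μ ν, fgwE α p q π' = 0 :=
    le_antisymm (hcost ▸ biInf_le _ hπ) zero_le
  rw [FGW, hinf]
  exact ENNReal.zero_rpow_of_pos (one_div_pos.mpr hp)

theorem fgwE_map_eq_zero {Z : Type*} [MeasurableSpace Z] {α p q : ℝ} (μ : Measure Z)
    (g : Z → (X × Ω) × (Y × Ω))
    (hg : ∀ z z', ((1 - α) * dist (g z).1.2 (g z).2.2 ^ q
        + α * |dist (g z).1.1 (g z').1.1 - dist (g z).2.1 (g z').2.1| ^ q) ^ p = 0) :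
    fgwE α p q (μ.map g) = 0 := by
  refine le_antisymm ?_ zero_le
  calc fgwE α p q (μ.map g)
      ≤ ∫⁻ z, ∫⁻ w', ENNReal.ofReal (((1 - α) * dist (g z).1.2 (g z).2.2 ^ q
          + α * |dist (g z).1.1 w'.1.1 - dist (g z).2.1 w'.2.1| ^ q) ^ p) ∂(μ.map g) ∂μ :=
        lintegral_map_le _ g
    _ ≤ ∫⁻ z, ∫⁻ z', ENNReal.ofReal (((1 - α) * dist (g z).1.2 (g z).2.2 ^ q
          + α * |dist (g z).1.1 (g z').1.1 - dist (g z).2.1 (g z').2.1| ^ q) ^ p) ∂μ ∂μ :=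
        lintegral_mono fun z => lintegral_map_le _ g
    _ = 0 := by simp only [hg, ENNReal.ofReal_zero, lintegral_zero]

theorem fgwE_map_graph_eq_zero {α p q : ℝ} (hp : p ≠ 0) (hq : q ≠ 0) (μ : Measure (X × Ω))
    {f : X → Y} (hf : ∀ x x', dist (f x) (f x') = dist x x') :
    fgwE α p q (μ.map fun z => (z, (f z.1, z.2))) = 0 :=
  fgwE_map_eq_zero μ _ fun z z' => by
    simp [hf, Real.zero_rpow hp, Real.zero_rpow hq]

end FGW

theorem stmt10_general {X Y Ω : Type*} [MetricSpace X] [MetricSpace Y] [MetricSpace Ω]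
    [MeasurableSpace X] [BorelSpace X] [MeasurableSpace Y] [BorelSpace Y]
    [MeasurableSpace Ω]
    (μ : Measure (X × Ω)) (ν : Measure (Y × Ω))
    (f₁ : X → Y)
    (hiso : ∀ x x' : X, dist (f₁ x) (f₁ x') = dist x x')
    (hpush : μ.map (fun z => (f₁ z.1, z.2)) = ν)
    (α p q : ℝ) (hp : 1 ≤ p) (hq : 1 ≤ q) :
    FGW α p q μ ν = 0 := by
  have hf₁ : Measurable f₁ := (Isometry.of_dist_eq hiso).continuous.measurable
  have hT : Measurable fun z : X × Ω => (f₁ z.1, z.2) :=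
    (hf₁.comp measurable_fst).prodMk measurable_snd
  exact FGW.eq_zero_of_fgwE_eq_zero (FGW.map_graph_mem_couplings hT hpush)
    (FGW.fgwE_map_graph_eq_zero (by positivity) (by positivity) μ hiso) (by positivity)

theorem stmt10 {X Y Ω : Type*} [MetricSpace X] [MetricSpace Y] [MetricSpace Ω]
    [MeasurableSpace X] [BorelSpace X] [MeasurableSpace Y] [BorelSpace Y]
    [MeasurableSpace Ω] [BorelSpace Ω]
    (μ : Measure (X × Ω)) (ν : Measure (Y × Ω))
    [IsProbabilityMeasure μ] [IsProbabilityMeasure ν]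
    (f₁ : X → Y) (hsurj : Function.Surjective f₁)
    (hiso : ∀ x x' : X, dist (f₁ x) (f₁ x') = dist x x')
    (hpush : μ.map (fun z => (f₁ z.1, z.2)) = ν)
    (α p q : ℝ) (hα : α ∈ Set.Ioo (0 : ℝ) 1) (hp : 1 ≤ p) (hq : 1 ≤ q) :
    FGW α p q μ ν = 0 :=
  stmt10_general μ ν f₁ hiso hpush α p q hp hq

end
end

section
/- Conversely, if FGW_{α,p,q}(μ,ν) = 0 for some α ∈ (0,1), p, q ≥ 1, then there exists f = (f₁, f₂) : X×A → Y×B such that f#μ = ν, f₁ is an isometry from X onto Y, and f₂ is the identity (in particular A = B). -/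
open MeasureTheory ENNReal Set

noncomputable section

open Filter Topology Metric

/-- Along an ultrafilter, every `ℝ≥0∞`-valued sequence tends to its limsup. -/
lemma ulim_tendsto (U : Ultrafilter ℕ) (f : ℕ → ℝ≥0∞) :
    Tendsto f U (𝓝 (limsup f U)) := by
  obtain ⟨c, -, h⟩ := isCompact_univ.ultrafilter_le_nhds (U.map f) (by simp)
  have ht : Tendsto f U (𝓝 c) := h
  rwa [ht.limsup_eq]

lemma ulim_sum_le {K : Type*} [MeasurableSpace K] (π : ℕ → MeasureTheory.Measure K)
    (U : Ultrafilter ℕ) (c : ℕ → ℝ≥0∞) {ι : Type*} (t : Finset ι) (B : ι → Set K)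
    (h : ∀ n, c n ≤ ∑ i ∈ t, π n (B i)) :
    limsup c U ≤ ∑ i ∈ t, limsup (fun n => π n (B i)) U := by
  have h1 : Tendsto (fun n => ∑ i ∈ t, π n (B i)) U
      (𝓝 (∑ i ∈ t, limsup (fun n => π n (B i)) U)) :=
    tendsto_finset_sum t fun i _ => ulim_tendsto U _
  exact le_of_tendsto_of_tendsto' (ulim_tendsto U c) h1 h

theorem stmt11 {X Y Ω : Type*} [MetricSpace X] [MetricSpace Y] [MetricSpace Ω]
    [CompactSpace X] [CompactSpace Y] [CompactSpace Ω]
    [MeasurableSpace X] [BorelSpace X] [MeasurableSpace Y] [BorelSpace Y]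
    [MeasurableSpace Ω] [BorelSpace Ω]
    (μ : Measure (X × Ω)) (ν : Measure (Y × Ω))
    [IsProbabilityMeasure μ] [IsProbabilityMeasure ν]
    [μ.IsOpenPosMeasure] [ν.IsOpenPosMeasure]
    (α p q : ℝ) (hα : α ∈ Set.Ioo (0 : ℝ) 1) (hp : 1 ≤ p) (hq : 1 ≤ q)
    (h : FGW α p q μ ν = 0) :
    ∃ f₁ : X → Y, Function.Surjective f₁ ∧
      (∀ x x' : X, dist (f₁ x) (f₁ x') = dist x x') ∧
      μ.map (fun z => (f₁ z.1, z.2)) = ν := by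
  obtain ⟨hα0, hα1⟩ := hα
  have hp0 : (0:ℝ) < p := lt_of_lt_of_le one_pos hp
  have hq0 : (0:ℝ) < q := lt_of_lt_of_le one_pos hq
  -- nonemptiness
  have hneXΩ : Nonempty (X × Ω) := by
    by_contra hc
    rw [not_nonempty_iff] at hc
    have : μ Set.univ = 1 := measure_univ
    rw [Set.univ_eq_empty_iff.2 hc, measure_empty] at this
    exact zero_ne_one this
  have hneYΩ : Nonempty (Y × Ω) := by
    by_contra hc
    rw [not_nonempty_iff] at hc
    have : ν Set.univ = 1 := measure_univ
    rw [Set.univ_eq_empty_iff.2 hc, measure_empty] at this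
    exact zero_ne_one this
  haveI : Nonempty X := ⟨hneXΩ.some.1⟩
  haveI : Nonempty Ω := ⟨hneXΩ.some.2⟩
  haveI : Nonempty Y := ⟨hneYΩ.some.1⟩
  -- the infimum vanishes
  have hinf : ⨅ π ∈ Couplings μ ν, fgwE α p q π = 0 := by
    rcases ENNReal.rpow_eq_zero_iff.mp h with ⟨h1, _⟩ | ⟨_, h2⟩
    · exact h1
    · exfalso; have : (0:ℝ) < 1/p := by positivity
      linarith
  -- a minimizing sequence of couplings
  have hseq : ∀ n : ℕ, ∃ π : Measure ((X × Ω) × (Y × Ω)),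
      π ∈ Couplings μ ν ∧ fgwE α p q π ≤ ((n : ℝ≥0∞) + 1)⁻¹ := by
    intro n
    have hlt : ⨅ π ∈ Couplings μ ν, fgwE α p q π < ((n : ℝ≥0∞) + 1)⁻¹ := by
      rw [hinf]; simp
    rw [iInf_lt_iff] at hlt
    obtain ⟨π, hπ⟩ := hlt
    rw [iInf_lt_iff] at hπ
    obtain ⟨hmem, hπ⟩ := hπ
    exact ⟨π, hmem, hπ.le⟩
  choose π hπc hπe using hseq
  -- the costs tend to zero along the ultrafilter
  obtain ⟨U, hU⟩ : ∃ U : Ultrafilter ℕ, (U : Filter ℕ) ≤ atTop :=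
    ⟨Ultrafilter.of atTop, Ultrafilter.of_le _⟩
  have hcost0 : Tendsto (fun n => fgwE α p q (π n)) U (𝓝 0) := by
    have hb : Tendsto (fun n : ℕ => ((n:ℝ≥0∞)+1)⁻¹) atTop (𝓝 0) := by
      have h1 := ENNReal.tendsto_inv_nat_nhds_zero
      have h2 : Tendsto (fun n : ℕ => (n:ℕ)+1) atTop atTop := tendsto_add_atTop_nat 1
      have h3 := h1.comp h2
      convert h3 using 2 with n
      simp [Function.comp]
    exact tendsto_of_tendsto_of_tendsto_of_le_of_le tendsto_const_nhds
      (hb.mono_left hU) (fun n => zero_le) hπe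
  -- the limit "measure" of a set
  set L : Set ((X × Ω) × (Y × Ω)) → ℝ≥0∞ := fun S => limsup (fun n => π n S) U with hLdef
  have hLt : ∀ S, Tendsto (fun n => π n S) U (𝓝 (L S)) := fun S => ulim_tendsto U _
  have hLmono : ∀ S T, S ⊆ T → L S ≤ L T := by
    intro S T hST
    exact limsup_le_limsup (Eventually.of_forall fun n => measure_mono hST)
  -- marginals
  have hfst : ∀ (n : ℕ) {A : Set (X × Ω)}, MeasurableSet A → π n (Prod.fst ⁻¹' A) = μ A := by
    intro n A hA
    rw [← (hπc n).1, Measure.map_apply measurable_fst hA]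
  have hsnd : ∀ (n : ℕ) {A : Set (Y × Ω)}, MeasurableSet A → π n (Prod.snd ⁻¹' A) = ν A := by
    intro n A hA
    rw [← (hπc n).2, Measure.map_apply measurable_snd hA]
  -- the persistence relation
  set R : Set ((X × Ω) × (Y × Ω)) := {z | ∀ r > 0, 0 < L (ball z r)} with hRdef
  -- key vanishing relation on R
  have hπuniv : ∀ n, π n Set.univ = 1 := by
    intro n
    have h0 := hfst n MeasurableSet.univ
    rw [Set.preimage_univ] at h0
    rw [h0, measure_univ]
  have hrel : ∀ z ∈ R, ∀ z' ∈ R,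
      dist z.1.2 z.2.2 = 0 ∧ dist z.1.1 z'.1.1 = dist z.2.1 z'.2.1 := by
    have hL1 : ∀ S, L S ≤ 1 := by
      intro S
      exact limsup_le_of_le (by isBoundedDefault)
        (Eventually.of_forall fun n => le_trans (measure_mono (Set.subset_univ S)) (hπuniv n).le)
    set g : ((X × Ω) × (Y × Ω)) → ((X × Ω) × (Y × Ω)) → ℝ := fun u u' =>
      (1 - α) * dist u.1.2 u.2.2 ^ q + α * |dist u.1.1 u'.1.1 - dist u.2.1 u'.2.1| ^ q with hgdef
    have hgnn : ∀ u u', 0 ≤ g u u' := by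
      intro u u'
      have h1 : (0:ℝ) ≤ dist u.1.2 u.2.2 ^ q := Real.rpow_nonneg dist_nonneg q
      have h2 : (0:ℝ) ≤ |dist u.1.1 u'.1.1 - dist u.2.1 u'.2.1| ^ q :=
        Real.rpow_nonneg (abs_nonneg _) q
      have : (0:ℝ) ≤ (1 - α) * dist u.1.2 u.2.2 ^ q := mul_nonneg (by linarith) h1
      have : (0:ℝ) ≤ α * |dist u.1.1 u'.1.1 - dist u.2.1 u'.2.1| ^ q :=
        mul_nonneg (by linarith) h2
      simp only [hgdef]; linarith
    have key : ∀ z ∈ R, ∀ z' ∈ R, g z z' = 0 := by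
      intro z hz z' hz'
      refine le_antisymm ?_ (hgnn z z')
      by_contra hs'
      push_neg at hs'
      set s := g z z' with hsdef
      clear_value s
      -- continuity of g
      have hrpow : Continuous fun t : ℝ => t ^ q :=
        continuous_iff_continuousAt.2 fun t => Real.continuousAt_rpow_const t q (Or.inr hq0.le)
      have hGcont : Continuous (fun pp : ((X × Ω) × (Y × Ω)) × ((X × Ω) × (Y × Ω)) =>
          g pp.1 pp.2) := by
        apply Continuous.add
        · apply continuous_const.mul
          exact hrpow.comp (Continuous.dist (by fun_prop) (by fun_prop))
        · apply continuous_const.mul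
          apply hrpow.comp
          exact continuous_abs.comp
            ((Continuous.dist (by fun_prop) (by fun_prop)).sub
              (Continuous.dist (by fun_prop) (by fun_prop)))
      have hO : IsOpen {pp : ((X × Ω) × (Y × Ω)) × ((X × Ω) × (Y × Ω)) | s/2 < g pp.1 pp.2} :=
        isOpen_lt continuous_const hGcont
      have hmem : (z, z') ∈ {pp : ((X × Ω) × (Y × Ω)) × ((X × Ω) × (Y × Ω)) | s/2 < g pp.1 pp.2} := by
        show s/2 < g z z'
        rw [← hsdef]
        linarith
      obtain ⟨r, hr0, hball⟩ := Metric.isOpen_iff.mp hO (z, z') hmem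
      set c : ℝ≥0∞ := ENNReal.ofReal ((s/2) ^ p) with hcdef
      have hc0 : c ≠ 0 := by
        simp only [hcdef, ne_eq, ENNReal.ofReal_eq_zero, not_le]
        exact Real.rpow_pos_of_pos (by linarith) p
      have hcne : c ≠ ⊤ := ENNReal.ofReal_ne_top
      have hkey : ∀ n, c * (π n (ball z' r) * π n (ball z r)) ≤ fgwE α p q (π n) := by
        intro n
        have step1 : ∀ w ∈ ball z r,
            c * π n (ball z' r) ≤ ∫⁻ w', ENNReal.ofReal ((g w w') ^ p) ∂(π n) := by
          intro w hw
          have hpt : ∀ w', (ball z' r).indicator (fun _ => c) w' ≤ ENNReal.ofReal ((g w w') ^ p) := by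
            intro w'
            by_cases hw' : w' ∈ ball z' r
            · rw [Set.indicator_of_mem hw']
              have hmem2 : (w, w') ∈ ball (z, z') r := by
                rw [← ball_prod_same]
                exact Set.mk_mem_prod hw hw'
              have hgw : s/2 < g w w' := hball hmem2
              exact ENNReal.ofReal_le_ofReal (Real.rpow_le_rpow (by linarith) hgw.le hp0.le)
            · rw [Set.indicator_of_notMem hw']
              exact zero_le
          calc c * π n (ball z' r)
              = ∫⁻ w', (ball z' r).indicator (fun _ => c) w' ∂(π n) := by
                rw [lintegral_indicator_const measurableSet_ball]
            _ ≤ _ := lintegral_mono hpt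
        have hfg : fgwE α p q (π n) = ∫⁻ w, ∫⁻ w', ENNReal.ofReal ((g w w') ^ p) ∂(π n) ∂(π n) := rfl
        rw [hfg, ← mul_assoc]
        calc c * π n (ball z' r) * π n (ball z r)
            = ∫⁻ w, (ball z r).indicator (fun _ => c * π n (ball z' r)) w ∂(π n) := by
              rw [lintegral_indicator_const measurableSet_ball]
          _ ≤ _ := by
              apply lintegral_mono
              intro w
              by_cases hw : w ∈ ball z r
              · rw [Set.indicator_of_mem hw]; exact step1 w hw
              · rw [Set.indicator_of_notMem hw]; exact zero_le
      have hlim : Tendsto (fun n => c * (π n (ball z' r) * π n (ball z r))) U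
          (𝓝 (c * (L (ball z' r) * L (ball z r)))) := by
        apply ENNReal.Tendsto.const_mul _ (Or.inr hcne)
        apply ENNReal.Tendsto.mul (hLt _) _ (hLt _) _
        · exact Or.inr (lt_of_le_of_lt (hL1 _) one_lt_top).ne
        · exact Or.inr (lt_of_le_of_lt (hL1 _) one_lt_top).ne
      have hfin : c * (L (ball z' r) * L (ball z r)) ≤ 0 :=
        le_of_tendsto_of_tendsto' hlim hcost0 hkey
      have : c * (L (ball z' r) * L (ball z r)) = 0 := le_antisymm hfin (zero_le)
      rcases mul_eq_zero.mp this with hc | hzz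
      · exact hc0 hc
      · rcases mul_eq_zero.mp hzz with h1 | h2
        · exact absurd h1 (hz' r hr0).ne'
        · exact absurd h2 (hz r hr0).ne'
    intro z hz z' hz'
    have hzz := key z hz z' hz'
    have h1 : (0:ℝ) ≤ dist z.1.2 z.2.2 ^ q := Real.rpow_nonneg dist_nonneg q
    have h2 : (0:ℝ) ≤ |dist z.1.1 z'.1.1 - dist z.2.1 z'.2.1| ^ q :=
      Real.rpow_nonneg (abs_nonneg _) q
    simp only [hgdef] at hzz
    have hA : dist z.1.2 z.2.2 ^ q = 0 := by nlinarith
    have hB : |dist z.1.1 z'.1.1 - dist z.2.1 z'.2.1| ^ q = 0 := by nlinarith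
    constructor
    · exact (Real.rpow_eq_zero dist_nonneg hq0.ne').mp hA
    · have := (Real.rpow_eq_zero (abs_nonneg _) hq0.ne').mp hB
      have := abs_eq_zero.mp this
      linarith
  -- totality of R
  have htotL : ∀ w : X × Ω, ∃ w', (w, w') ∈ R := by
    intro w
    by_contra hc
    push_neg at hc
    have hc' : ∀ w' : Y × Ω, ∃ r > 0, L (ball (w, w') r) = 0 := by
      intro w'
      have h1 : ¬ (∀ r > 0, 0 < L (ball (w, w') r)) := hc w'
      push_neg at h1
      obtain ⟨r, hr, h0⟩ := h1
      exact ⟨r, hr, le_antisymm h0 (zero_le)⟩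
    choose rad hrad hrad0 using hc'
    obtain ⟨t, ht⟩ := isCompact_univ.elim_finite_subcover (fun w' : Y × Ω => ball w' (rad w'))
      (fun w' => isOpen_ball) (fun w' _ => Set.mem_iUnion.2 ⟨w', mem_ball_self (hrad w')⟩)
    have htne : t.Nonempty := by
      by_contra hte
      rw [Finset.not_nonempty_iff_eq_empty] at hte
      have := ht (Set.mem_univ (Classical.arbitrary (Y × Ω)))
      simp [hte] at this
    set r0 := t.inf' htne rad with hr0def
    have hr00 : 0 < r0 := (Finset.lt_inf'_iff htne).2 fun i _ => hrad i
    have hbound : ∀ n, μ (ball w r0) ≤ ∑ w' ∈ t, π n (ball (w, w') (rad w')) := by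
      intro n
      rw [← hfst n measurableSet_ball]
      have hsub : Prod.fst ⁻¹' (ball w r0) ⊆ ⋃ w' ∈ t, ball (w, w') (rad w') := by
        rintro ⟨u, v⟩ hu
        have hv : v ∈ ⋃ w' ∈ t, ball w' (rad w') := ht (Set.mem_univ v)
        rw [Set.mem_iUnion₂] at hv
        obtain ⟨w', hw't, hv⟩ := hv
        rw [Set.mem_iUnion₂]
        refine ⟨w', hw't, ?_⟩
        rw [← ball_prod_same]
        refine Set.mk_mem_prod ?_ hv
        exact lt_of_lt_of_le (mem_ball.mp hu) (Finset.inf'_le _ hw't)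
      calc π n (Prod.fst ⁻¹' (ball w r0)) ≤ π n (⋃ w' ∈ t, ball (w, w') (rad w')) :=
            measure_mono hsub
        _ ≤ ∑ w' ∈ t, π n (ball (w, w') (rad w')) := measure_biUnion_finset_le _ _
    have hle := ulim_sum_le π U (fun _ => μ (ball w r0)) t
      (fun w' : Y × Ω => ball (w, w') (rad w')) hbound
    rw [limsup_const] at hle
    have hzero : ∑ w' ∈ t, limsup (fun n => π n (ball (w, w') (rad w'))) U = 0 :=
      Finset.sum_eq_zero fun i _ => hrad0 i
    rw [hzero] at hle
    have hpos : 0 < μ (ball w r0) := measure_ball_pos μ w hr00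
    exact absurd (le_antisymm hle (zero_le)) hpos.ne'
  have htotR : ∀ w' : Y × Ω, ∃ w, (w, w') ∈ R := by
    intro w'
    by_contra hc
    push_neg at hc
    have hc' : ∀ w : X × Ω, ∃ r > 0, L (ball (w, w') r) = 0 := by
      intro w
      have h1 : ¬ (∀ r > 0, 0 < L (ball (w, w') r)) := hc w
      push_neg at h1
      obtain ⟨r, hr, h0⟩ := h1
      exact ⟨r, hr, le_antisymm h0 (zero_le)⟩
    choose rad hrad hrad0 using hc'
    obtain ⟨t, ht⟩ := isCompact_univ.elim_finite_subcover (fun w : X × Ω => ball w (rad w))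
      (fun w => isOpen_ball) (fun w _ => Set.mem_iUnion.2 ⟨w, mem_ball_self (hrad w)⟩)
    have htne : t.Nonempty := by
      by_contra hte
      rw [Finset.not_nonempty_iff_eq_empty] at hte
      have := ht (Set.mem_univ (Classical.arbitrary (X × Ω)))
      simp [hte] at this
    set r0 := t.inf' htne rad with hr0def
    have hr00 : 0 < r0 := (Finset.lt_inf'_iff htne).2 fun i _ => hrad i
    have hbound : ∀ n, ν (ball w' r0) ≤ ∑ w ∈ t, π n (ball (w, w') (rad w)) := by
      intro n
      rw [← hsnd n measurableSet_ball]
      have hsub : Prod.snd ⁻¹' (ball w' r0) ⊆ ⋃ w ∈ t, ball (w, w') (rad w) := by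
        rintro ⟨u, v⟩ hv
        have hu : u ∈ ⋃ w ∈ t, ball w (rad w) := ht (Set.mem_univ u)
        rw [Set.mem_iUnion₂] at hu
        obtain ⟨w, hwt, hu⟩ := hu
        rw [Set.mem_iUnion₂]
        refine ⟨w, hwt, ?_⟩
        rw [← ball_prod_same]
        refine Set.mk_mem_prod hu ?_
        exact lt_of_lt_of_le (mem_ball.mp hv) (Finset.inf'_le _ hwt)
      calc π n (Prod.snd ⁻¹' (ball w' r0)) ≤ π n (⋃ w ∈ t, ball (w, w') (rad w)) :=
            measure_mono hsub
        _ ≤ ∑ w ∈ t, π n (ball (w, w') (rad w)) := measure_biUnion_finset_le _ _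
    have hle := ulim_sum_le π U (fun _ => ν (ball w' r0)) t
      (fun w : X × Ω => ball (w, w') (rad w)) hbound
    rw [limsup_const] at hle
    have hzero : ∑ w ∈ t, limsup (fun n => π n (ball (w, w') (rad w))) U = 0 :=
      Finset.sum_eq_zero fun i _ => hrad0 i
    rw [hzero] at hle
    have hpos : 0 < ν (ball w' r0) := measure_ball_pos ν w' hr00
    exact absurd (le_antisymm hle (zero_le)) hpos.ne'
  -- construct f₁
  set P : X → Y → Prop := fun x y => ∃ a b, ((x,a),(y,b)) ∈ R with hPdef
  have hex : ∀ x, ∃ y, P x y := by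
    intro x
    obtain ⟨w', hw'⟩ := htotL (x, Classical.arbitrary Ω)
    exact ⟨w'.1, Classical.arbitrary Ω, w'.2, hw'⟩
  have huniq : ∀ x y y', P x y → P x y' → y = y' := by
    intro x y y' ⟨a, b, hab⟩ ⟨a', b', hab'⟩
    have := (hrel _ hab _ hab').2
    simp only [dist_self] at this
    exact dist_eq_zero.mp this.symm
  set f₁ : X → Y := fun x => (hex x).choose with hf₁def
  have hf₁ : ∀ x y, P x y → f₁ x = y := fun x y hy => huniq x _ y (hex x).choose_spec hy
  have hsurj : Function.Surjective f₁ := by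
    intro y
    obtain ⟨w, hw⟩ := htotR (y, Classical.arbitrary Ω)
    exact ⟨w.1, hf₁ w.1 y ⟨w.2, Classical.arbitrary Ω, hw⟩⟩
  have hiso : ∀ x x' : X, dist (f₁ x) (f₁ x') = dist x x' := by
    intro x x'
    obtain ⟨y, a, b, hm⟩ := hex x
    obtain ⟨y', a', b', hm'⟩ := hex x'
    rw [hf₁ x y ⟨a, b, hm⟩, hf₁ x' y' ⟨a', b', hm'⟩]
    exact ((hrel _ hm _ hm').2).symm
  -- the graph property
  have hgraph : ∀ z ∈ R, z.2 = ((f₁ z.1.1 : Y), z.1.2) := by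
    rintro ⟨⟨x, a⟩, ⟨y, b⟩⟩ hz
    have h1 : y = f₁ x := (hf₁ x y ⟨a, b, hz⟩).symm
    have h2 : b = a := by
      have := (hrel _ hz _ hz).1
      exact (dist_eq_zero.mp this).symm
    simp [h1, h2]
  -- the map and its continuity
  set f : X × Ω → Y × Ω := fun z => (f₁ z.1, z.2) with hfdef
  have hf₁iso : Isometry f₁ := Isometry.of_dist_eq hiso
  have hfc : Continuous f := (hf₁iso.continuous.comp continuous_fst).prodMk continuous_snd
  -- concentration near the graph
  have hBad0 : ∀ δ : ℝ, 0 < δ → L {z | δ ≤ dist z.2 (f z.1)} = 0 := by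
    intro δ hδ
    by_contra h0
    set Bad := {z : (X × Ω) × (Y × Ω) | δ ≤ dist z.2 (f z.1)} with hBdef
    have hBclosed : IsClosed Bad :=
      isClosed_le continuous_const (continuous_snd.dist (hfc.comp continuous_fst))
    have hBcompact : IsCompact Bad := hBclosed.isCompact
    have hpt : ∀ k : ℕ, ∃ z ∈ Bad, 0 < L (ball z ((k:ℝ)+1)⁻¹) := by
      intro k
      have hrk : (0:ℝ) < ((k:ℝ)+1)⁻¹ := by positivity
      obtain ⟨t, htB, ht⟩ := hBcompact.elim_nhds_subcover (fun z => ball z ((k:ℝ)+1)⁻¹)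
        (fun z _ => ball_mem_nhds z hrk)
      by_contra hcc
      push_neg at hcc
      have hbound : ∀ n, π n Bad ≤ ∑ z ∈ t, π n (ball z ((k:ℝ)+1)⁻¹) := fun n =>
        le_trans (measure_mono ht) (measure_biUnion_finset_le _ _)
      have hle := ulim_sum_le π U (fun n => π n Bad) t (fun z => ball z ((k:ℝ)+1)⁻¹) hbound
      have hzero : ∑ z ∈ t, limsup (fun n => π n (ball z ((k:ℝ)+1)⁻¹)) U = 0 :=
        Finset.sum_eq_zero fun z hz => le_antisymm (hcc z (htB z hz)) (zero_le)
      rw [hzero] at hle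
      exact h0 (le_antisymm hle (zero_le))
    choose zk hzkB hzk using hpt
    obtain ⟨zlim, hzlimB, ψ, hψ, hconv⟩ := hBcompact.tendsto_subseq hzkB
    have hzlimR : zlim ∈ R := by
      intro r hr
      obtain ⟨N1, hN1⟩ := Metric.tendsto_atTop.mp hconv (r/2) (by linarith)
      obtain ⟨N2, hN2⟩ : ∃ N : ℕ, ((N:ℝ)+1)⁻¹ < r/2 := by
        obtain ⟨N, hN⟩ := exists_nat_gt (2/r)
        refine ⟨N, ?_⟩
        have h2r : (0:ℝ) < 2/r := by positivity
        have : (r/2)⁻¹ < (N:ℝ)+1 := by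
          rw [inv_div]
          linarith
        have h3 := inv_strictAnti₀ (by positivity) this
        rwa [inv_inv] at h3
      set k := max N1 N2 with hkdef
      have hψk : (k:ℝ) ≤ (ψ k : ℝ) := by exact_mod_cast hψ.le_apply
      have hN2k : ((k:ℝ)+1)⁻¹ ≤ ((N2:ℝ)+1)⁻¹ := by
        apply inv_anti₀ (by positivity)
        have : (N2:ℝ) ≤ (k:ℝ) := by exact_mod_cast le_max_right N1 N2
        linarith
      have hb : ball (zk (ψ k)) (((ψ k : ℕ):ℝ)+1)⁻¹ ⊆ ball zlim r := by
        intro u hu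
        have h3 : dist u (zk (ψ k)) < (((ψ k : ℕ):ℝ)+1)⁻¹ := mem_ball.mp hu
        have h4 : (((ψ k : ℕ):ℝ)+1)⁻¹ ≤ ((k:ℝ)+1)⁻¹ := by
          apply inv_anti₀ (by positivity)
          linarith
        have h5 : dist (zk (ψ k)) zlim < r/2 := hN1 k (le_max_left _ _)
        have h6 := dist_triangle u (zk (ψ k)) zlim
        rw [mem_ball]
        linarith
      exact lt_of_lt_of_le (hzk (ψ k)) (hLmono _ _ hb)
    have hgr := hgraph zlim hzlimR
    have hd : dist zlim.2 (f zlim.1) = 0 := by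
      rw [hgr]
      exact dist_self _
    have : δ ≤ dist zlim.2 (f zlim.1) := hzlimB
    rw [hd] at this
    linarith
  -- pushforward identity
  have hmap : μ.map f = ν := by
    have hfmeas : Measurable f := hfc.measurable
    haveI : IsProbabilityMeasure (μ.map f) := Measure.isProbabilityMeasure_map hfmeas.aemeasurable
    apply ext_of_forall_lintegral_eq_of_IsFiniteMeasure
    intro φ
    have hφm : Measurable fun y : Y × Ω => (φ y : ℝ≥0∞) :=
      measurable_coe_nnreal_ennreal.comp φ.continuous.measurable
    rw [lintegral_map hφm hfmeas]
    obtain ⟨z0, hz0⟩ : ∃ z0 : Y × Ω, ∀ z, φ z ≤ φ z0 := by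
      obtain ⟨z0, -, hmax⟩ := isCompact_univ.exists_isMaxOn Set.univ_nonempty
        φ.continuous.continuousOn
      exact ⟨z0, fun z => hmax (Set.mem_univ z)⟩
    set C : ℝ≥0∞ := (φ z0 : ℝ≥0∞) with hCdef
    have hsndint : ∀ n, ∫⁻ z, (φ z : ℝ≥0∞) ∂ν = ∫⁻ w, (φ w.2 : ℝ≥0∞) ∂(π n) := by
      intro n
      rw [← (hπc n).2, lintegral_map hφm measurable_snd]
    have hφfm : Measurable fun z : X × Ω => (φ (f z) : ℝ≥0∞) := hφm.comp hfmeas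
    have hfstint : ∀ n, ∫⁻ z, (φ (f z) : ℝ≥0∞) ∂μ = ∫⁻ w, (φ (f w.1) : ℝ≥0∞) ∂(π n) := by
      intro n
      rw [← (hπc n).1, lintegral_map hφfm measurable_fst]
    have hucφ : UniformContinuous φ := CompactSpace.uniformContinuous_of_continuous φ.continuous
    have main : ∀ ε : NNReal, 0 < ε →
        (∫⁻ z, (φ z : ℝ≥0∞) ∂ν ≤ ∫⁻ z, (φ (f z) : ℝ≥0∞) ∂μ + ε ∧
         ∫⁻ z, (φ (f z) : ℝ≥0∞) ∂μ ≤ ∫⁻ z, (φ z : ℝ≥0∞) ∂ν + ε) := by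
      intro ε hε
      obtain ⟨δ, hδ0, hδ⟩ := Metric.uniformContinuous_iff.mp hucφ ε (by exact_mod_cast hε)
      set Bad := {z : (X × Ω) × (Y × Ω) | δ ≤ dist z.2 (f z.1)} with hBdef
      have hBmeas : MeasurableSet Bad :=
        (isClosed_le continuous_const (continuous_snd.dist (hfc.comp continuous_fst))).measurableSet
      have hLBad : L Bad = 0 := hBad0 δ hδ0
      have key2 : ∀ a b : NNReal, dist a b < ε → (a : ℝ≥0∞) ≤ (b : ℝ≥0∞) + (ε : ℝ≥0∞) := by
        intro a b hab
        rw [← ENNReal.coe_add, ENNReal.coe_le_coe, ← NNReal.coe_le_coe]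
        push_cast
        rw [NNReal.dist_eq] at hab
        have h2 := abs_sub_le_iff.mp hab.le
        linarith [h2.1]
      have hC2 : C ≤ 2 * C := by
        rw [two_mul]
        exact le_add_self
      have hptwise : ∀ w : (X × Ω) × (Y × Ω),
          (φ w.2 : ℝ≥0∞) ≤ (φ (f w.1) : ℝ≥0∞) + ε + Bad.indicator (fun _ => 2 * C) w ∧
          (φ (f w.1) : ℝ≥0∞) ≤ (φ w.2 : ℝ≥0∞) + ε + Bad.indicator (fun _ => 2 * C) w := by
        intro w
        by_cases hw : w ∈ Bad
        · rw [Set.indicator_of_mem hw]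
          constructor
          · exact le_add_left (le_trans (ENNReal.coe_le_coe.2 (hz0 _)) hC2)
          · exact le_add_left (le_trans (ENNReal.coe_le_coe.2 (hz0 _)) hC2)
        · simp only [Set.indicator_of_notMem hw, add_zero]
          have hdist : dist w.2 (f w.1) < δ := not_le.mp hw
          have h1 : dist (φ w.2) (φ (f w.1)) < ε := hδ hdist
          exact ⟨key2 _ _ h1, key2 _ _ (by rwa [dist_comm] at h1)⟩
      have hint : ∀ n,
          ∫⁻ w, (φ w.2 : ℝ≥0∞) ∂(π n) ≤
            ∫⁻ w, (φ (f w.1) : ℝ≥0∞) ∂(π n) + ε + 2 * C * π n Bad ∧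
          ∫⁻ w, (φ (f w.1) : ℝ≥0∞) ∂(π n) ≤
            ∫⁻ w, (φ w.2 : ℝ≥0∞) ∂(π n) + ε + 2 * C * π n Bad := by
        intro n
        have heq1 : ∫⁻ w, ((φ (f w.1) : ℝ≥0∞) + ε + Bad.indicator (fun _ => 2 * C) w) ∂(π n)
            = ∫⁻ w, (φ (f w.1) : ℝ≥0∞) ∂(π n) + ε + 2 * C * π n Bad := by
          rw [lintegral_add_right _ (measurable_const.indicator hBmeas),
              lintegral_add_right _ measurable_const,
              lintegral_const, lintegral_indicator_const hBmeas, hπuniv n, mul_one]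
        have heq2 : ∫⁻ w, ((φ w.2 : ℝ≥0∞) + ε + Bad.indicator (fun _ => 2 * C) w) ∂(π n)
            = ∫⁻ w, (φ w.2 : ℝ≥0∞) ∂(π n) + ε + 2 * C * π n Bad := by
          rw [lintegral_add_right _ (measurable_const.indicator hBmeas),
              lintegral_add_right _ measurable_const,
              lintegral_const, lintegral_indicator_const hBmeas, hπuniv n, mul_one]
        constructor
        · rw [← heq1]
          exact lintegral_mono fun w => (hptwise w).1
        · rw [← heq2]
          exact lintegral_mono fun w => (hptwise w).2
      have hBtend : Tendsto (fun n => 2 * C * π n Bad) U (𝓝 0) := by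
        have h1 := hLt Bad
        rw [hLBad] at h1
        have h2 := ENNReal.Tendsto.const_mul (a := 2 * C) h1 (Or.inr (by
          simp only [hCdef]
          exact (ENNReal.mul_ne_top (by norm_num) ENNReal.coe_ne_top)))
        rw [mul_zero] at h2
        exact h2
      constructor
      · have hchain : ∀ n, ∫⁻ z, (φ z : ℝ≥0∞) ∂ν ≤
            (∫⁻ z, (φ (f z) : ℝ≥0∞) ∂μ + ε) + 2 * C * π n Bad := by
          intro n
          rw [hsndint n, hfstint n, add_assoc] at *
          have := (hint n).1
          rwa [add_assoc] at this
        have hten : Tendsto (fun n => (∫⁻ z, (φ (f z) : ℝ≥0∞) ∂μ + ε) + 2 * C * π n Bad) U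
            (𝓝 ((∫⁻ z, (φ (f z) : ℝ≥0∞) ∂μ + ε) + 0)) :=
          Tendsto.add tendsto_const_nhds hBtend
        have := ge_of_tendsto' hten hchain
        rwa [add_zero] at this
      · have hchain : ∀ n, ∫⁻ z, (φ (f z) : ℝ≥0∞) ∂μ ≤
            (∫⁻ z, (φ z : ℝ≥0∞) ∂ν + ε) + 2 * C * π n Bad := by
          intro n
          rw [hsndint n, hfstint n, add_assoc] at *
          have := (hint n).2
          rwa [add_assoc] at this
        have hten : Tendsto (fun n => (∫⁻ z, (φ z : ℝ≥0∞) ∂ν + ε) + 2 * C * π n Bad) U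
            (𝓝 ((∫⁻ z, (φ z : ℝ≥0∞) ∂ν + ε) + 0)) :=
          Tendsto.add tendsto_const_nhds hBtend
        have := ge_of_tendsto' hten hchain
        rwa [add_zero] at this
    apply le_antisymm
    · exact ENNReal.le_of_forall_pos_le_add fun ε hε _ => (main ε hε).2
    · exact ENNReal.le_of_forall_pos_le_add fun ε hε _ => (main ε hε).1
  exact ⟨f₁, hsurj, hiso, hmap⟩

end
end
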